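/- arXiv:1412.4051 — 4 statements merged into one kernel-verified Lean document; each statement's English description precedes it below -/
import Mathlib

section
/- Let l be a natural number, d, D real numbers with 0 ≤ d ≤ D, and let P be a path of length l each of whose edges is assigned delay either d or D, such that the edges assigned delay d form a matching of the underlying graph (restricted to P, no two of them share an endpoint). Then the total delay of P (sum of edge delays) is at least ⌈l/2⌉ · d + ⌊l/2⌋ · D. -/
private lemma stmt_7_aux {V : Type*} {G : SimpleGraph V}
    (d D : ℝ) (hd : 0 ≤ d) (hdD : d ≤ D) (delay : Sym2 V → ℝ) :
    ∀ {u v : V} (p : G.Walk u v), p.IsPath →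
      (∀ e ∈ p.edges, delay e = d ∨ delay e = D) →
      (∀ e₁ ∈ p.edges, ∀ e₂ ∈ p.edges, delay e₁ = d → delay e₂ = d →
        e₁ ≠ e₂ → ∀ x : V, x ∈ e₁ → x ∉ e₂) →
      (((p.length + 1) / 2 : ℕ) : ℝ) * d + ((p.length / 2 : ℕ) : ℝ) * D
        ≤ (p.edges.map delay).sum
  | u, _, .nil, hp, hval, hmatch => by simp
  | u, _, .cons (v := w) h (.nil), hp, hval, hmatch => by
      have he : delay s(u, w) = d ∨ delay s(u, w) = D := hval _ (by simp)
      rcases he with he | he <;> simp [he] <;> linarith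
  | u, v, .cons (v := w) h (.cons (v := x) h' r), hp, hval, hmatch => by
      have hp' := hp.of_cons
      have hp'' := hp'.of_cons
      have hmem0 : s(u, w) ∈ (SimpleGraph.Walk.cons h (SimpleGraph.Walk.cons h' r)).edges := by simp
      have hmem1 : s(w, x) ∈ (SimpleGraph.Walk.cons h (SimpleGraph.Walk.cons h' r)).edges := by simp
      have he0 := hval _ hmem0
      rcases he0 with he0 | he0
      · -- first edge has delay d, so second must have delay D
        have hne : s(u, w) ≠ s(w, x) := by
          have hnd := hp.edges_nodup
          simp only [SimpleGraph.Walk.edges_cons, List.nodup_cons, List.mem_cons] at hnd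
          intro hcontra
          exact hnd.1 (Or.inl hcontra)
        have he1 : delay s(w, x) = D := by
          rcases hval _ hmem1 with he1 | he1
          · exact absurd (Sym2.mem_mk_left w x)
              (hmatch _ hmem0 _ hmem1 he0 he1 hne w (Sym2.mem_mk_right u w))
          · exact he1
        have IH := stmt_7_aux d D hd hdD delay r hp''
          (fun e he => hval e (by
            simp only [SimpleGraph.Walk.edges_cons, List.mem_cons]; tauto))
          (fun e₁ h₁ e₂ h₂ => hmatch e₁ (by
              simp only [SimpleGraph.Walk.edges_cons, List.mem_cons]; tauto)
            e₂ (by simp only [SimpleGraph.Walk.edges_cons, List.mem_cons]; tauto))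
        simp only [SimpleGraph.Walk.edges_cons, SimpleGraph.Walk.length_cons,
          List.map_cons, List.sum_cons, he0, he1]
        have h1 : (r.length + 1 + 1 + 1) / 2 = (r.length + 1) / 2 + 1 := by omega
        have h2 : (r.length + 1 + 1) / 2 = r.length / 2 + 1 := by omega
        rw [h1, h2]
        push_cast
        linarith
      · -- first edge has delay D
        have IH := stmt_7_aux d D hd hdD delay (SimpleGraph.Walk.cons h' r) hp'
          (fun e he => hval e (by
            simp only [SimpleGraph.Walk.edges_cons, List.mem_cons] at he ⊢; tauto))
          (fun e₁ h₁ e₂ h₂ => hmatch e₁ (by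
              simp only [SimpleGraph.Walk.edges_cons, List.mem_cons] at h₁ ⊢; tauto)
            e₂ (by simp only [SimpleGraph.Walk.edges_cons, List.mem_cons] at h₂ ⊢; tauto))
        simp only [SimpleGraph.Walk.edges_cons, SimpleGraph.Walk.length_cons,
          List.map_cons, List.sum_cons, he0] at IH ⊢
        set m := r.length + 1 with hm
        have h1 : (m + 1 + 1) / 2 = m / 2 + 1 := by omega
        rw [h1]
        have hle : ((m + 1) / 2 : ℕ) ≤ m / 2 + 1 := by omega
        have hle' : (((m + 1) / 2 : ℕ) : ℝ) ≤ ((m / 2 : ℕ) : ℝ) + 1 := by exact_mod_cast hle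
        push_cast at IH ⊢
        nlinarith [mul_le_mul_of_nonneg_left hdD (sub_nonneg.mpr hle')]
termination_by u v p => p.length

/-- Lower bound on the delay of a path of length `l` whose edges each have delay
    `d` or `D` (0 ≤ d ≤ D), where the `d`-delay edges form a matching (no two of
    them share an endpoint): the total delay is at least ⌈l/2⌉·d + ⌊l/2⌋·D. -/
theorem stmt_7 {V : Type*} {G : SimpleGraph V} {u v : V} (l : ℕ)
    (d D : ℝ) (hd : 0 ≤ d) (hdD : d ≤ D)
    (p : G.Walk u v) (hp : p.IsPath) (hl : p.length = l)
    (delay : Sym2 V → ℝ)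
    (hval : ∀ e ∈ p.edges, delay e = d ∨ delay e = D)
    (hmatch : ∀ e₁ ∈ p.edges, ∀ e₂ ∈ p.edges, delay e₁ = d → delay e₂ = d →
      e₁ ≠ e₂ → ∀ x : V, x ∈ e₁ → x ∉ e₂) :
    (((l + 1) / 2 : ℕ) : ℝ) * d + ((l / 2 : ℕ) : ℝ) * D ≤ (p.edges.map delay).sum := by
  subst hl
  exact stmt_7_aux d D hd hdD delay p hp hval hmatch
end

section
/- Let a₁, …, aₙ be positive integers with total sum B, where B is even. Consider the graph G with vertex set {s, t, v₁, …, vₙ} with edges s–vᵢ and vᵢ–t for all i, vertex weights w(s) = w(t) = B/2 and w(vᵢ) = aᵢ, and edge delays 1 for inter-cluster edges and 0 for intra-cluster edges. Then there exists a subset S₁ ⊆ {1,…,n} with Σ_{i∈S₁} aᵢ = B/2 if and only if there exists a partition of the vertices of G into clusters, each of total weight at most B, such that every (s,t)-path has delay at most 1. -/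
/-!
Every (s,t)-path is `s – vᵢ – t`, so its delay is at most 1 exactly when `vᵢ` shares a cluster
with `s` or with `t`. If `S₁` has weight `B/2`, the two clusters `{s} ∪ S₁` and `{t} ∪ S₁ᶜ` both
weigh exactly `B`. Conversely, the cluster of `s` and the cluster of `t` each carry weight `B/2`
from `s` resp. `t`, so the `vᵢ` in either one weigh at most `B/2`; since every `vᵢ` lies in one
of them and the `vᵢ` weigh `B` in total, those in the cluster of `s` weigh exactly `B/2`.
-/

open Finset

lemma ite_add_ite_le_one_iff {γ : Type*} [DecidableEq γ] (x y z : γ) :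
    ((if x = y then 0 else 1) + (if x = z then 0 else 1) : ℕ) ≤ 1 ↔ x = y ∨ x = z := by
  split_ifs <;> simp_all

section
variable {α β : Type*} [Fintype α] [Fintype β]

lemma sum_filter_sumElim {M : Type*} [AddCommMonoid M] (f : α → M) (g : β → M)
    (p : α ⊕ β → Prop) [DecidablePred p] :
    ∑ v ∈ univ.filter p, Sum.elim f g v =
      ∑ i ∈ univ.filter (fun i => p (Sum.inl i)), f i +
        ∑ b ∈ univ.filter (fun b => p (Sum.inr b)), g b := by
  simp only [sum_filter, Fintype.sum_sum_type, Sum.elim_inl, Sum.elim_inr]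

lemma add_le_sum_filter_sumElim {γ : Type*} [DecidableEq γ] (a : α → ℕ) (m : ℕ)
    (c : α ⊕ β → γ) (b : β) :
    ∑ i ∈ univ.filter (fun i => c (Sum.inl i) = c (Sum.inr b)), a i + m ≤
      ∑ v ∈ univ.filter (fun v => c v = c (Sum.inr b)), Sum.elim a (fun _ => m) v := by
  rw [sum_filter_sumElim]
  exact Nat.add_le_add le_rfl
    (single_le_sum (f := fun _ => m) (fun _ _ => Nat.zero_le m) (mem_filter.2 ⟨mem_univ b, rfl⟩))

end

section
variable {α : Type*} [Fintype α] [DecidableEq α] (a : α → ℕ) (m : ℕ)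

lemma exists_sum_eq_of_clustering (hsum : ∑ i, a i = m + m) (c : α ⊕ Bool → ℕ)
    (hw : ∀ j, ∑ v ∈ univ.filter (fun v => c v = j), Sum.elim a (fun _ => m) v ≤ m + m)
    (hst : ∀ i, c (Sum.inl i) = c (Sum.inr true) ∨ c (Sum.inl i) = c (Sum.inr false)) :
    ∃ S : Finset α, ∑ i ∈ S, a i = m := by
  set S := univ.filter (fun i => c (Sum.inl i) = c (Sum.inr true))
  refine ⟨S, ?_⟩
  set T := univ.filter (fun i => c (Sum.inl i) = c (Sum.inr false))
  have hS : ∑ i ∈ S, a i + m ≤ m + m := (add_le_sum_filter_sumElim a m c true).trans (hw _)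
  have hT : ∑ i ∈ T, a i + m ≤ m + m := (add_le_sum_filter_sumElim a m c false).trans (hw _)
  have hSc : ∑ i ∈ Sᶜ, a i ≤ ∑ i ∈ T, a i :=
    sum_le_sum_of_subset fun i hi => by
      simp only [S, T, mem_compl, mem_filter, mem_univ, true_and] at hi ⊢
      exact (hst i).resolve_left hi
  have := sum_add_sum_compl S a
  rw [hsum] at this
  omega

lemma exists_clustering_of_sum_eq (hsum : ∑ i, a i = m + m) (S : Finset α)
    (hS : ∑ i ∈ S, a i = m) :
    ∃ c : α ⊕ Bool → ℕ,
      (∀ j, ∑ v ∈ univ.filter (fun v => c v = j), Sum.elim a (fun _ => m) v ≤ m + m) ∧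
      ∀ i, c (Sum.inl i) = c (Sum.inr true) ∨ c (Sum.inl i) = c (Sum.inr false) := by
  refine ⟨Sum.elim (fun i => if i ∈ S then 0 else 1) (fun b => if b then 0 else 1), ?_, ?_⟩
  · intro j
    have hSc : ∑ i ∈ Sᶜ, a i = m := by
      have := sum_add_sum_compl S a
      omega
    rw [sum_filter_sumElim]
    obtain rfl | rfl | hj : j = 0 ∨ j = 1 ∨ 2 ≤ j := by omega
    · simpa [-Fintype.univ_bool, filter_eq'] using hS.le
    · simpa [-Fintype.univ_bool, filter_eq', ← compl_filter] using hSc.le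
    · have h1 : ∀ i, (if i ∈ S then 0 else 1) ≠ j := fun i => by split_ifs <;> omega
      have h2 : ∀ b : Bool, (if b then 0 else 1) ≠ j := fun b => by split_ifs <;> omega
      simp [h1, h2]
  · intro i
    by_cases h : i ∈ S <;> simp [h]

end

theorem stmt_8_general (n : ℕ) (a : Fin n → ℕ)
    (B : ℕ) (hB : B = ∑ i, a i) (hBeven : Even B) :
    (∃ S₁ : Finset (Fin n), ∑ i ∈ S₁, a i = B / 2) ↔
    (∃ c : (Fin n ⊕ Bool) → ℕ,
      (∀ j : ℕ, ∑ v ∈ Finset.univ.filter (fun v => c v = j),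
          (Sum.elim a (fun _ => B / 2) v) ≤ B) ∧
      (∀ i : Fin n,
        ((if c (Sum.inl i) = c (Sum.inr true) then 0 else 1) +
         (if c (Sum.inl i) = c (Sum.inr false) then 0 else 1) : ℕ) ≤ 1)) := by
  obtain ⟨m, rfl⟩ := hBeven
  rw [show (m + m) / 2 = m by omega]
  simp only [ite_add_ite_le_one_iff]
  exact ⟨fun ⟨S, hS⟩ => exists_clustering_of_sum_eq a m hB.symm S hS,
    fun ⟨c, hw, hst⟩ => exists_sum_eq_of_clustering a m hB.symm c hw hst⟩

/-- Correctness of the reduction from Partition to clustering without replication.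
    Vertices: `Sum.inl i` is `vᵢ`, `Sum.inr true` is `s`, `Sum.inr false` is `t`.
    A clustering is a map `c` to cluster indices; each cluster has weight at most `B`;
    an edge has delay 0 iff its endpoints are in the same cluster; every (s,t)-path
    is `s – vᵢ – t` and must have delay at most 1. -/
theorem stmt_8 (n : ℕ) (a : Fin n → ℕ) (ha : ∀ i, 0 < a i)
    (B : ℕ) (hB : B = ∑ i, a i) (hBeven : Even B) :
    (∃ S₁ : Finset (Fin n), ∑ i ∈ S₁, a i = B / 2) ↔
    (∃ c : (Fin n ⊕ Bool) → ℕ,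
      (∀ j : ℕ, ∑ v ∈ Finset.univ.filter (fun v => c v = j),
          (Sum.elim a (fun _ => B / 2) v) ≤ B) ∧
      (∀ i : Fin n,
        ((if c (Sum.inl i) = c (Sum.inr true) then 0 else 1) +
         (if c (Sum.inl i) = c (Sum.inr false) then 0 else 1) : ℕ) ≤ 1)) :=
  stmt_8_general n a B hB hBeven
end

section
/- Let a₁, …, aₙ be positive integers with sum B (B even), and consider the graph G with vertices {s, t, v₁, …, vₙ}, edges s–vᵢ and vᵢ–t, vertex weights w(s) = w(t) = B/2, w(vᵢ) = aᵢ, and cluster weight capacity B. In any clustering of G achieving (s,t)-delay at most 1 (edges within a cluster have delay 0, edges between clusters have delay 1), every vertex vᵢ lies in the same cluster as s or in the same cluster as t, and the total weight of the vᵢ clustered with s equals B/2. -/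
/-- Reverse direction of the Partition reduction: in any clustering of the gadget
    graph with cluster capacity `B` achieving (s,t)-delay at most 1, every `vᵢ` is
    clustered with `s` or with `t`, and the `vᵢ` clustered with `s` have total
    weight `B/2`.  (`Sum.inl i` is `vᵢ`, `Sum.inr true` is `s`, `Sum.inr false` is `t`.) -/
theorem stmt_9 (n : ℕ) (a : Fin n → ℕ) (ha : ∀ i, 0 < a i)
    (B : ℕ) (hB : B = ∑ i, a i) (hBeven : Even B)
    (c : (Fin n ⊕ Bool) → ℕ)
    (hw : ∀ j : ℕ, ∑ v ∈ Finset.univ.filter (fun v => c v = j),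
        (Sum.elim a (fun _ => B / 2) v) ≤ B)
    (hdelay : ∀ i : Fin n,
      ((if c (Sum.inl i) = c (Sum.inr true) then 0 else 1) +
       (if c (Sum.inl i) = c (Sum.inr false) then 0 else 1) : ℕ) ≤ 1) :
    (∀ i : Fin n, c (Sum.inl i) = c (Sum.inr true) ∨ c (Sum.inl i) = c (Sum.inr false)) ∧
    ∑ i ∈ Finset.univ.filter (fun i : Fin n => c (Sum.inl i) = c (Sum.inr true)), a i
      = B / 2 := by
  have hst : ∀ i : Fin n, c (Sum.inl i) = c (Sum.inr true) ∨ c (Sum.inl i) = c (Sum.inr false) := by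
    intro i
    have := hdelay i
    by_contra h
    push_neg at h
    simp [h.1, h.2] at this
  refine ⟨hst, ?_⟩
  set js := c (Sum.inr true) with hjs
  set jt := c (Sum.inr false) with hjt
  have hB2 : B / 2 + B / 2 = B := by
    obtain ⟨k, hk⟩ := hBeven; omega
  have key : ∀ j, ∑ v ∈ Finset.univ.filter (fun v => c v = j), Sum.elim a (fun _ => B/2) v
      = (∑ i ∈ Finset.univ.filter (fun i : Fin n => c (Sum.inl i) = j), a i)
        + ((if js = j then B/2 else 0) + (if jt = j then B/2 else 0)) := by
    intro j
    rw [Finset.sum_filter, Fintype.sum_sum_type, Fintype.sum_bool, Finset.sum_filter]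
    simp [← hjs, ← hjt]
  by_cases hcase : js = jt
  · -- all vᵢ in the same cluster; forces B = 0
    have hall : Finset.univ.filter (fun i : Fin n => c (Sum.inl i) = js) = Finset.univ := by
      apply Finset.filter_true_of_mem
      intro i _
      rcases hst i with h | h
      · exact h
      · rw [h, ← hcase]
    have := hw js
    rw [key js, hall, if_pos rfl, if_pos hcase.symm, ← hB] at this
    have hB0 : B = 0 := by omega
    have : ∀ i ∈ Finset.univ.filter (fun i : Fin n => c (Sum.inl i) = js), a i = 0 := by
      intro i _
      have hle : a i ≤ ∑ j, a j := Finset.single_le_sum (fun j _ => Nat.zero_le _) (Finset.mem_univ i)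
      omega
    rw [Finset.sum_congr rfl this]
    simp [hB0]
  · -- s and t in different clusters
    have hs := hw js
    rw [key js, if_pos rfl, if_neg (fun h => hcase h.symm)] at hs
    have ht := hw jt
    rw [key jt, if_neg hcase, if_pos rfl] at ht
    have hpart : (∑ i ∈ Finset.univ.filter (fun i : Fin n => c (Sum.inl i) = js), a i)
        + (∑ i ∈ Finset.univ.filter (fun i : Fin n => c (Sum.inl i) = jt), a i) = B := by
      rw [← Finset.sum_filter_add_sum_filter_not Finset.univ
        (fun i : Fin n => c (Sum.inl i) = js) a] at hB
      have : Finset.univ.filter (fun i : Fin n => ¬ c (Sum.inl i) = js)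
          = Finset.univ.filter (fun i : Fin n => c (Sum.inl i) = jt) := by
        apply Finset.filter_congr
        intro i _
        constructor
        · intro h
          rcases hst i with h' | h'
          · exact absurd h' h
          · exact h'
        · intro h h'
          exact hcase (h'.symm.trans h)
      rw [this] at hB
      omega
    omega
end

section
/- Consider the DAG on vertices {a, b, c, e, f, g, h, i, j, k} with arcs a→b, a→c, b→e, b→k, c→f, c→g, e→h, k→h, f→i, g→i, h→j, i→j. Let d, D be real numbers with 0 ≤ d < D. For any maximal matching M of the underlying simple graph, assign delay d to edges in M and delay D to edges not in M. Then: (1) every directed path from a to j (each of which has exactly 4 arcs) contains at least one edge of M, so no (a,j)-path has delay 4D; and (2) at least one directed (a,j)-path contains exactly one edge of M, i.e., has delay d + 3D. -/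
/-- Arcs of the bridge gadget; vertices of `Fin 10` are named
    a=0, b=1, c=2, e=3, f=4, g=5, h=6, i=7, j=8, k=9. -/
def bridgeArcs : List (Fin 10 × Fin 10) :=
  [(0, 1), (0, 2), (1, 3), (1, 9), (2, 4), (2, 5), (3, 6), (9, 6), (4, 7), (5, 7), (6, 8), (7, 8)]

/-- The underlying simple graph of the bridge gadget. -/
def bridgeGraph : SimpleGraph (Fin 10) :=
  SimpleGraph.fromEdgeSet {e | ∃ p ∈ bridgeArcs, e = s(p.1, p.2)}

/-- The delay of a directed path `p` (given as its list of vertices): edges in the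
    matching `M` get delay `d`, all other edges get delay `D`. -/
def bridgeDelay (d D : ℝ) (M : Finset (Sym2 (Fin 10))) (p : List (Fin 10)) : ℝ :=
  ((p.zip p.tail).map (fun q => if s(q.1, q.2) ∈ M then d else D)).sum

/-!
Every arc raises the distance from `a` by one, so the directed `(a,j)`-paths are the four
paths `a u x w j` through the two diamonds `b - e, k - h` and `c - f, g - i`, and the delay of a
path is `4D - m (D - d)` where `m` counts its matched edges. The middle vertex `x` of such a path
has degree two, so if the path missed the maximal matching, `u` and `w` would both have to be
matched to the other middle vertex `x'`. For the second part, one of the two pendant edges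
`a b`, `a c` is unmatched, say `a u`. In that diamond, if `w j` is matched it is the only matched
edge of the path through a middle vertex not matched to `u`; otherwise the path through `x` meets
the matching only in `u x` or `x w`, which share `x`.
-/

section Matching

variable {V : Type*} {G : SimpleGraph V} {M : Finset (Sym2 V)}

def matchedCount [DecidableEq V] (M : Finset (Sym2 V)) (p : List V) : ℕ :=
  ((p.zip p.tail).filter fun q => s(q.1, q.2) ∈ M).length

lemma eq_of_mk_mem_of_mk_mem (hM : ∀ e₁ ∈ M, ∀ e₂ ∈ M, e₁ ≠ e₂ → ∀ x : V, x ∈ e₁ → x ∉ e₂)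
    {x u w : V} (hu : s(x, u) ∈ M) (hw : s(x, w) ∈ M) : u = w := by
  by_contra huw
  exact hM _ hu _ hw (mt Sym2.congr_right.mp huw) x (Sym2.mem_mk_left x u) (Sym2.mem_mk_left x w)

lemma exists_mk_mem_of_adj_of_unmatched (hMG : ∀ e ∈ M, e ∈ G.edgeSet)
    (hmax : ∀ e ∈ G.edgeSet, e ∉ M → ∃ e' ∈ M, ∃ x : V, x ∈ e ∧ x ∈ e')
    {u x : V} (hux : G.Adj u x) (hx : ∀ y, G.Adj x y → s(x, y) ∉ M) :
    ∃ y, G.Adj u y ∧ s(u, y) ∈ M := by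
  obtain ⟨e, he, z, hz, hze⟩ := hmax s(u, x) hux (hx u hux.symm ∘ (Sym2.eq_swap ▸ ·))
  obtain ⟨y, rfl⟩ := Sym2.mem_iff_exists.mp hze
  have hzy : G.Adj z y := hMG _ he
  rcases Sym2.mem_iff.mp hz with rfl | rfl
  · exact ⟨y, hzy, he⟩
  · exact absurd he (hx y hzy)

theorem exists_mem_zip_of_diamond (hMG : ∀ e ∈ M, e ∈ G.edgeSet)
    (hM : ∀ e₁ ∈ M, ∀ e₂ ∈ M, e₁ ≠ e₂ → ∀ x : V, x ∈ e₁ → x ∉ e₂)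
    (hmax : ∀ e ∈ G.edgeSet, e ∉ M → ∃ e' ∈ M, ∃ x : V, x ∈ e ∧ x ∈ e')
    {a u x x' w j : V} (hu : ∀ y, G.Adj u y → y = a ∨ y = x ∨ y = x')
    (hx : ∀ y, G.Adj x y → y = u ∨ y = w) (hw : ∀ y, G.Adj w y → y = x ∨ y = x' ∨ y = j)
    (hux : G.Adj u x) (hxw : G.Adj x w) (huw : u ≠ w) :
    ∃ q ∈ [a, u, x, w, j].zip [u, x, w, j], s(q.1, q.2) ∈ M := by
  by_contra! h
  simp only [List.zip_cons_cons, List.zip_nil_right, List.mem_cons, List.not_mem_nil, or_false,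
    forall_eq_or_imp, forall_eq] at h
  obtain ⟨hau, hux', hxw', hwj⟩ := h
  have hxfree : ∀ y, G.Adj x y → s(x, y) ∉ M := by
    intro y hy
    rcases hx y hy with rfl | rfl
    · rwa [Sym2.eq_swap]
    · exact hxw'
  obtain ⟨y, hy, hyM⟩ := exists_mk_mem_of_adj_of_unmatched hMG hmax hux hxfree
  obtain ⟨z, hz, hzM⟩ := exists_mk_mem_of_adj_of_unmatched hMG hmax hxw.symm hxfree
  have hy' : y = x' := by
    rcases hu y hy with rfl | rfl | rfl
    · exact absurd (Sym2.eq_swap ▸ hyM) hau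
    · exact absurd hyM hux'
    · rfl
  have hz' : z = x' := by
    rcases hw z hz with rfl | rfl | rfl
    · exact absurd (Sym2.eq_swap ▸ hzM) hxw'
    · rfl
    · exact absurd hzM hwj
  subst hy' hz'
  exact huw (eq_of_mk_mem_of_mk_mem hM (Sym2.eq_swap ▸ hyM) (Sym2.eq_swap ▸ hzM))


theorem exists_matchedCount_eq_one_of_diamond [DecidableEq V]
    (hM : ∀ e₁ ∈ M, ∀ e₂ ∈ M, e₁ ≠ e₂ → ∀ x : V, x ∈ e₁ → x ∉ e₂)
    {a u x x' w j : V} (hxx' : x ≠ x') (hxj : x ≠ j) (hx'j : x' ≠ j) (huw : u ≠ w)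
    (hau : s(a, u) ∉ M) (h : ∃ q ∈ [a, u, x, w, j].zip [u, x, w, j], s(q.1, q.2) ∈ M) :
    ∃ y, (y = x ∨ y = x') ∧ matchedCount M [a, u, y, w, j] = 1 := by
  by_cases hwj : s(w, j) ∈ M
  · have hxw : s(x, w) ∉ M := fun hxw => hxj (eq_of_mk_mem_of_mk_mem hM (Sym2.eq_swap ▸ hxw) hwj)
    have hx'w : s(x', w) ∉ M :=
      fun hx'w => hx'j (eq_of_mk_mem_of_mk_mem hM (Sym2.eq_swap ▸ hx'w) hwj)
    by_cases hux : s(u, x) ∈ M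
    · have hux' : s(u, x') ∉ M := fun hux' => hxx' (eq_of_mk_mem_of_mk_mem hM hux hux')
      exact ⟨x', Or.inr rfl, by simp [matchedCount, hau, hux', hx'w, hwj]⟩
    · exact ⟨x, Or.inl rfl, by simp [matchedCount, hau, hux, hxw, hwj]⟩
  · refine ⟨x, Or.inl rfl, ?_⟩
    by_cases hux : s(u, x) ∈ M
    · have hxw : s(x, w) ∉ M :=
        fun hxw => huw (eq_of_mk_mem_of_mk_mem hM (Sym2.eq_swap ▸ hux) hxw)
      simp [matchedCount, hau, hux, hxw, hwj]
    · have hxw : s(x, w) ∈ M := by simpa [hau, hux, hwj] using h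
      simp [matchedCount, hau, hux, hxw, hwj]

end Matching

lemma bridgeDelay_eq (d D : ℝ) (M : Finset (Sym2 (Fin 10))) (p : List (Fin 10)) :
    bridgeDelay d D M p = (p.zip p.tail).length * D - matchedCount M p * (D - d) := by
  rw [bridgeDelay, List.sum_map_ite,
    List.length_eq_length_filter_add fun q => decide (s(q.1, q.2) ∈ M)]
  simp [matchedCount, List.map_const', List.sum_replicate]
  ring

lemma rank_getLast_of_isChain {α : Type*} {R : α → α → Prop} (r : α → ℕ)
    (hr : ∀ u v, R u v → r v = r u + 1) :
    ∀ (a : α) (t : List α), (a :: t).IsChain R →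
      r ((a :: t).getLast (List.cons_ne_nil a t)) = r a + t.length
  | _, [], _ => rfl
  | a, b :: t, h => by
    rw [List.isChain_cons_cons] at h
    rw [List.getLast_cons (List.cons_ne_nil b t), rank_getLast_of_isChain r hr b t h.2, hr a b h.1,
      List.length_cons]
    ring

def bridgeRank : Fin 10 → ℕ := ![0, 1, 1, 2, 2, 2, 3, 3, 4, 2]

def bridgePaths : List (List (Fin 10)) :=
  [[0, 1, 3, 6, 8], [0, 1, 9, 6, 8], [0, 2, 4, 7, 8], [0, 2, 5, 7, 8]]

lemma bridgePaths_spec : ∀ p ∈ bridgePaths, p.head? = some 0 ∧ p.getLast? = some 8 ∧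
    p.IsChain (fun u v => (u, v) ∈ bridgeArcs) ∧ p.length = 5 := by
  decide

lemma mem_bridgePaths {p : List (Fin 10)} (h0 : p.head? = some 0) (h8 : p.getLast? = some 8)
    (hp : p.IsChain (fun u v => (u, v) ∈ bridgeArcs)) : p ∈ bridgePaths := by
  obtain ⟨t, rfl⟩ : ∃ t, p = 0 :: t := by
    rcases p with _ | ⟨a, t⟩ <;> simp_all
  have hlast : (0 :: t).getLast (List.cons_ne_nil 0 t) = 8 := by
    simpa [List.getLast?_eq_some_getLast (List.cons_ne_nil 0 t)] using h8
  have hlen := rank_getLast_of_isChain bridgeRank (by decide) 0 t hp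
  rw [hlast] at hlen
  clear h0 h8
  match t, hlen, hlast, hp with
  | [b, c, e, f], _, hf, hp =>
    obtain rfl : f = 8 := hf
    revert b c e hp
    decide

lemma bridgeGraph_adj {u v : Fin 10} :
    bridgeGraph.Adj u v ↔ (u, v) ∈ bridgeArcs ∨ (v, u) ∈ bridgeArcs := by
  simp only [bridgeGraph, SimpleGraph.fromEdgeSet_adj, Set.mem_ofPred_eq, Sym2.eq_iff]
  constructor
  · rintro ⟨⟨q, hq, ⟨rfl, rfl⟩ | ⟨rfl, rfl⟩⟩, -⟩
    · exact Or.inl hq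
    · exact Or.inr hq
  · rintro (h | h)
    · exact ⟨⟨_, h, Or.inl ⟨rfl, rfl⟩⟩, by revert u v; decide⟩
    · exact ⟨⟨_, h, Or.inr ⟨rfl, rfl⟩⟩, by revert u v; decide⟩

instance : DecidableRel bridgeGraph.Adj := fun _ _ => decidable_of_iff _ bridgeGraph_adj.symm

section BridgeMatching

variable {M : Finset (Sym2 (Fin 10))}
  (hM : ∀ e₁ ∈ M, ∀ e₂ ∈ M, e₁ ≠ e₂ → ∀ x : Fin 10, x ∈ e₁ → x ∉ e₂)
include hM

lemma bridgePaths_meet_matching (hMG : ∀ e ∈ M, e ∈ bridgeGraph.edgeSet)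
    (hmax : ∀ e ∈ bridgeGraph.edgeSet, e ∉ M → ∃ e' ∈ M, ∃ x : Fin 10, x ∈ e ∧ x ∈ e') :
    ∀ p ∈ bridgePaths, ∃ q ∈ p.zip p.tail, s(q.1, q.2) ∈ M := by
  simp only [bridgePaths, List.mem_cons, List.not_mem_nil, or_false]
  rintro p (rfl | rfl | rfl | rfl)
  · refine exists_mem_zip_of_diamond hMG hM hmax (x' := 9) ?_ ?_ ?_ ?_ ?_ ?_ <;> decide
  · refine exists_mem_zip_of_diamond hMG hM hmax (x' := 3) ?_ ?_ ?_ ?_ ?_ ?_ <;> decide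
  · refine exists_mem_zip_of_diamond hMG hM hmax (x' := 5) ?_ ?_ ?_ ?_ ?_ ?_ <;> decide
  · refine exists_mem_zip_of_diamond hMG hM hmax (x' := 4) ?_ ?_ ?_ ?_ ?_ ?_ <;> decide

lemma exists_bridgePath_matchedCount_eq_one
    (hmeet : ∀ p ∈ bridgePaths, ∃ q ∈ p.zip p.tail, s(q.1, q.2) ∈ M) :
    ∃ p ∈ bridgePaths, matchedCount M p = 1 := by
  by_cases h01 : s(0, 1) ∈ M
  · have h02 : s(0, 2) ∉ M := fun h02 => absurd (eq_of_mk_mem_of_mk_mem hM h01 h02) (by decide)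
    obtain ⟨y, hy, hcount⟩ := exists_matchedCount_eq_one_of_diamond hM (x' := 5)
      (by decide) (by decide) (by decide) (by decide) h02 (hmeet [0, 2, 4, 7, 8] (by decide))
    exact ⟨_, by rcases hy with rfl | rfl <;> decide, hcount⟩
  · obtain ⟨y, hy, hcount⟩ := exists_matchedCount_eq_one_of_diamond hM (x' := 9)
      (by decide) (by decide) (by decide) (by decide) h01 (hmeet [0, 1, 3, 6, 8] (by decide))
    exact ⟨_, by rcases hy with rfl | rfl <;> decide, hcount⟩

end BridgeMatching

theorem stmt_11_general (d D : ℝ) (hdD : d < D)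
    (M : Finset (Sym2 (Fin 10)))
    (hMG : ∀ e ∈ M, e ∈ bridgeGraph.edgeSet)
    (hMmatch : ∀ e₁ ∈ M, ∀ e₂ ∈ M, e₁ ≠ e₂ → ∀ x : Fin 10, x ∈ e₁ → x ∉ e₂)
    (hMmax : ∀ e ∈ bridgeGraph.edgeSet, e ∉ M → ∃ e' ∈ M, ∃ x : Fin 10, x ∈ e ∧ x ∈ e') :
    (∀ p : List (Fin 10), p.head? = some 0 → p.getLast? = some 8 →
        p.Chain' (fun u v => (u, v) ∈ bridgeArcs) →
        p.length = 5 ∧ (∃ q ∈ p.zip p.tail, s(q.1, q.2) ∈ M) ∧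
          bridgeDelay d D M p ≠ 4 * D) ∧
    (∃ p : List (Fin 10), p.head? = some 0 ∧ p.getLast? = some 8 ∧
        p.Chain' (fun u v => (u, v) ∈ bridgeArcs) ∧
        ((p.zip p.tail).filter (fun q => s(q.1, q.2) ∈ M)).length = 1 ∧
        bridgeDelay d D M p = d + 3 * D) := by
  have hmeet := bridgePaths_meet_matching hMmatch hMG hMmax
  refine ⟨fun p h0 h8 hp => ?_, ?_⟩
  · have hpath := mem_bridgePaths h0 h8 hp
    have hlen := (bridgePaths_spec p hpath).2.2.2
    have hcount : 0 < matchedCount M p :=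
      List.length_filter_pos_iff.mpr (by simpa using hmeet p hpath)
    refine ⟨hlen, hmeet p hpath, ?_⟩
    have hpos : 0 < (matchedCount M p : ℝ) * (D - d) :=
      mul_pos (Nat.cast_pos.mpr hcount) (sub_pos.mpr hdD)
    rw [bridgeDelay_eq, List.length_zip, List.length_tail, hlen]
    exact ne_of_lt (by norm_num; linarith)
  · obtain ⟨p, hpath, hcount⟩ := exists_bridgePath_matchedCount_eq_one hMmatch hmeet
    obtain ⟨h0, h8, hp, hlen⟩ := bridgePaths_spec p hpath
    refine ⟨p, h0, h8, hp, hcount, ?_⟩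
    rw [bridgeDelay_eq, List.length_zip, List.length_tail, hlen, hcount]
    norm_num
    ring

/-- Bridge-gadget lemma: for any maximal matching `M` of the underlying simple graph
    of the bridge DAG, with matched edges given delay `d` and unmatched edges delay
    `D` (0 ≤ d < D): (1) every directed (a,j)-path has exactly 4 arcs, contains an
    edge of `M`, and does not have delay 4D; (2) some directed (a,j)-path contains
    exactly one edge of `M` and has delay d + 3D. -/
theorem stmt_11 (d D : ℝ) (hd : 0 ≤ d) (hdD : d < D)
    (M : Finset (Sym2 (Fin 10)))
    (hMG : ∀ e ∈ M, e ∈ bridgeGraph.edgeSet)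
    (hMmatch : ∀ e₁ ∈ M, ∀ e₂ ∈ M, e₁ ≠ e₂ → ∀ x : Fin 10, x ∈ e₁ → x ∉ e₂)
    (hMmax : ∀ e ∈ bridgeGraph.edgeSet, e ∉ M → ∃ e' ∈ M, ∃ x : Fin 10, x ∈ e ∧ x ∈ e') :
    (∀ p : List (Fin 10), p.head? = some 0 → p.getLast? = some 8 →
        p.Chain' (fun u v => (u, v) ∈ bridgeArcs) →
        p.length = 5 ∧ (∃ q ∈ p.zip p.tail, s(q.1, q.2) ∈ M) ∧
          bridgeDelay d D M p ≠ 4 * D) ∧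
    (∃ p : List (Fin 10), p.head? = some 0 ∧ p.getLast? = some 8 ∧
        p.Chain' (fun u v => (u, v) ∈ bridgeArcs) ∧
        ((p.zip p.tail).filter (fun q => s(q.1, q.2) ∈ M)).length = 1 ∧
        bridgeDelay d D M p = d + 3 * D) :=
  stmt_11_general d D hdD M hMG hMmatch hMmax
end
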